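/- Let G be a DAG on V, φ : V → V' a surjective map, and < a topological order of G such that every fiber φ⁻¹({v'}) is an interval (contiguous block) of <. Then the cluster graph G' on V', with edge v'_i → v'_j (for v'_i ≠ v'_j) whenever some edge u → w of G satisfies φ(u) = v'_i and φ(w) = v'_j, is acyclic. -/

import Mathlib

/-!
Since edges of `G` go up in the topological order, an edge between two distinct clusters
forces its whole source fiber to lie below its whole target fiber: otherwise, by
contiguity, one fiber would swallow an element of the other. "Every element of the fiber
of `x` is below every element of the fiber of `y`, both fibers being nonempty" is a strict
transitive relation on `V'`, so it contains the transitive closure of the cluster graph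
and has no loops.
-/

namespace Function

variable {V V' : Type*}

def FiberLT [Preorder V] (φ : V → V') (x y : V') : Prop :=
  (∃ a, φ a = x) ∧ (∃ b, φ b = y) ∧ ∀ a b, φ a = x → φ b = y → a < b

section Preorder

variable [Preorder V] (φ : V → V')

instance fiberLT_isTrans : IsTrans V' (FiberLT φ) where
  trans _ _ _ := fun ⟨hx, ⟨b, hb⟩, hxy⟩ ⟨_, hz, hyz⟩ =>
    ⟨hx, hz, fun a c ha hc => (hxy a b ha hb).trans (hyz b c hb hc)⟩

theorem fiberLT_irrefl (x : V') : ¬ FiberLT φ x x := fun ⟨⟨a, ha⟩, _, h⟩ =>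
  lt_irrefl a (h a a ha ha)

end Preorder

theorem fiberLT_of_lt [LinearOrder V] {φ : V → V'} (hφ : ∀ x, (φ ⁻¹' {x}).OrdConnected)
    {u w : V} (huw : u < w) (hne : φ u ≠ φ w) : FiberLT φ (φ u) (φ w) := by
  refine ⟨⟨u, rfl⟩, ⟨w, rfl⟩, fun a b ha hb => lt_of_not_ge fun hba => hne ?_⟩
  have mem {x : V'} {p q r : V} (hp : φ p = x) (hr : φ r = x) (hpq : p ≤ q) (hqr : q ≤ r) :
      φ q = x := (hφ x).out hp hr ⟨hpq, hqr⟩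
  rcases le_or_gt u b with hub | hbu
  · exact (mem rfl ha hub hba).symm.trans hb
  rcases le_or_gt a w with haw | hwa
  · exact ha.symm.trans (mem hb rfl hba haw)
  · exact (mem rfl ha huw.le hwa.le).symm

end Function

theorem cluster_graph_acyclic_of_contiguous_fibers_general {V V' : Type*} [LinearOrder V]
    (E : V → V → Prop)
    (htopo : ∀ u w : V, E u w → u < w)
    (φ : V → V')
    (hcontig : ∀ (v' : V') (a b c : V), φ a = v' → φ c = v' → a ≤ b → b ≤ c → φ b = v') :
    ∀ a' : V', ¬ Relation.TransGen
      (fun x' y' : V' => x' ≠ y' ∧ ∃ u w : V, E u w ∧ φ u = x' ∧ φ w = y') a' a' := by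
  have hfiber : ∀ x, (φ ⁻¹' {x}).OrdConnected := fun x =>
    ⟨fun a ha c hc b hb => hcontig x a b c ha hc hb.1 hb.2⟩
  have hedge : (fun x' y' : V' => x' ≠ y' ∧ ∃ u w : V, E u w ∧ φ u = x' ∧ φ w = y') ≤
      Function.FiberLT φ := by
    rintro _ _ ⟨hne, u, w, huw, rfl, rfl⟩
    exact Function.fiberLT_of_lt hfiber (htopo u w huw) hne
  exact fun a' h => Function.fiberLT_irrefl φ a' (Relation.transGen_minimal hedge _ _ h)

/-- If every fiber of the surjective map φ is an interval (contiguous block) of a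
topological order of the DAG G, then the cluster graph on V' is acyclic. -/
theorem cluster_graph_acyclic_of_contiguous_fibers {V V' : Type*} [LinearOrder V]
    (E : V → V → Prop) (hacyc : ∀ v : V, ¬ Relation.TransGen E v v)
    (htopo : ∀ u w : V, E u w → u < w)
    (φ : V → V') (hφ : Function.Surjective φ)
    (hcontig : ∀ (v' : V') (a b c : V), φ a = v' → φ c = v' → a ≤ b → b ≤ c → φ b = v') :
    ∀ a' : V', ¬ Relation.TransGen
      (fun x' y' : V' => x' ≠ y' ∧ ∃ u w : V, E u w ∧ φ u = x' ∧ φ w = y') a' a' :=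
  cluster_graph_acyclic_of_contiguous_fibers_general E htopo φ hcontig
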